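/- arXiv:2106.11499 — 4 statements merged into one kernel-verified Lean document; each statement's English description precedes it below -/
import Mathlib

section
/- If φ is potentially persistent in the interpreted system I, then K_i ◇¬φ → K_i ¬φ is valid in I. -/
def Kn {R S : Type*} (loc : R → ℕ → S) (φ : R → ℕ → Prop) : R → ℕ → Prop :=
  fun r t => ∀ r' t', loc r t = loc r' t' → φ r' t'

/-- If φ is potentially persistent (whenever φ holds, there is an alternative
run agreeing on all global states up to now in which φ holds forever), then
K ◇¬φ → K ¬φ. Local states are projections of global states. -/
theorem stmt_4 {R G S : Type*} (g : R → ℕ → G) (proj : G → S)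
    (φ : R → ℕ → Prop)
    (hpp : ∀ r t, φ r t →
      ∃ r', (∀ s ≤ t, g r' s = g r s) ∧ ∀ t' ≥ t, φ r' t') :
    ∀ r t,
      Kn (fun r t => proj (g r t)) (fun r t => ∃ t' ≥ t, ¬ φ r t') r t →
      Kn (fun r t => proj (g r t)) (fun r t => ¬ φ r t) r t := by
  intro r t hK r' t' hloc hφ
  obtain ⟨r'', hagree, hpers⟩ := hpp r' t' hφ
  obtain ⟨t'', ht'', hnφ⟩ := hK r'' t' (by dsimp only; rw [hagree t' le_rfl]; exact hloc)
  exact hnφ (hpers t'' ht'')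
end

section
/- If faultiness is stable, then B_i ◇(H_i φ) ↔ K_i ◇(H_i φ) is valid for every formula φ. -/
def Bn {R S : Type*} (loc : R → ℕ → S) (correct : R → ℕ → Prop)
    (φ : R → ℕ → Prop) : R → ℕ → Prop :=
  Kn loc (fun r t => correct r t → φ r t)

def Hn {R S : Type*} (loc : R → ℕ → S) (correct : R → ℕ → Prop)
    (φ : R → ℕ → Prop) : R → ℕ → Prop :=
  fun r t => correct r t → Bn loc correct φ r t

theorem stmt_6 {R S : Type*} (loc : R → ℕ → S) (correct : R → ℕ → Prop)
    (hstab : ∀ r t, ¬ correct r t → ∀ t' ≥ t, ¬ correct r t')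
    (φ : R → ℕ → Prop) :
    ∀ r t,
      Bn loc correct (fun r t => ∃ t' ≥ t, Hn loc correct φ r t') r t ↔
      Kn loc (fun r t => ∃ t' ≥ t, Hn loc correct φ r t') r t := by
  intro r t
  constructor
  · intro h r' t' hl
    by_cases hc : correct r' t'
    · exact h r' t' hl hc
    · exact ⟨t', le_refl _, fun hc' => absurd hc' hc⟩
  · intro h r' t' hl _
    exact h r' t' hl
end

section
/- Early local belief: suppose faultiness is stable, the formula (correct_i ∧ ¬start) is potentially persistent, and start is stable (start → □start is valid). Then B_i ◇(H_i start) → B_i start is valid. -/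
/-- Early local belief: B ◇(H start) → B start, given stable faultiness,
stable start, and potential persistence of (correct ∧ ¬start).
Local states are projections of global states. -/
theorem stmt_7 {R G S : Type*} (g : R → ℕ → G) (proj : G → S)
    (correct start : R → ℕ → Prop)
    (hstab : ∀ r t, ¬ correct r t → ∀ t' ≥ t, ¬ correct r t')
    (hstart_stable : ∀ r t, start r t → ∀ t' ≥ t, start r t')
    (hpp : ∀ r t, correct r t ∧ ¬ start r t →
      ∃ r', (∀ s ≤ t, g r' s = g r s) ∧
        ∀ t' ≥ t, correct r' t' ∧ ¬ start r' t') :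
    ∀ r t,
      Bn (fun r t => proj (g r t)) correct
        (fun r t => ∃ t' ≥ t, Hn (fun r t => proj (g r t)) correct start r t') r t →
      Bn (fun r t => proj (g r t)) correct start r t := by
  intro r t hB r' t' hloc hc
  by_contra hns
  obtain ⟨r'', hagree, hpers⟩ := hpp r' t' ⟨hc, hns⟩
  have hloc'' : proj (g r t) = proj (g r'' t') := by
    simp only [] at hloc; rw [hloc, hagree t' le_rfl]
  obtain ⟨t'', ht'', hH⟩ := hB r'' t' hloc'' (hpers t' le_rfl).1
  exact (hpers t'' ht'').2 (hH (hpers t'' ht'').1 r'' t'' rfl (hpers t'' ht'').1)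
end

section
/- Knowledge of stable facts is stable under perfect recall: if φ is stable (φ(r,t) and t' ≥ t imply φ(r,t')) and the system has perfect recall (whenever r_i(t') = r̄_i(s') and t ≤ t', there exists s ≤ s' with r_i(t) = r̄_i(s)), then K_i φ → □ K_i φ is valid. -/
/-- Knowledge of stable facts is stable under perfect recall: K φ → □ K φ. -/
theorem stmt_17 {R S : Type*} (loc : R → ℕ → S) (φ : R → ℕ → Prop)
    (hstable : ∀ r t t', φ r t → t ≤ t' → φ r t')
    (hrecall : ∀ r r' t t' s', loc r t' = loc r' s' → t ≤ t' →
      ∃ s ≤ s', loc r t = loc r' s) :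
    ∀ r t, Kn loc φ r t → ∀ t' ≥ t, Kn loc φ r t' := by
  intro r t hK t' ht' r'' s'' h
  obtain ⟨s, hs, hloc⟩ := hrecall r r'' t t' s'' h ht'
  exact hstable r'' s s'' (hK r'' s hloc) hs
end
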